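/- Suppose d = 1 (so an EL-chart is a semi-module: a non-empty subset A ⊆ ℤ bounded below with A + m ⊆ A and A + n ⊆ A). Call a semi-module A small if A + n ⊆ A + m (i.e. A + n ⊆ f(A) for f(a) = a + m). Then the type induces a bijection from the set of equivalence classes of small semi-modules onto the set of words μ' ∈ {0,1}^n with exactly m entries equal to 1 such that Σ_{i=1}^k μ'_i ≤ km/n for every k = 1,…,n; these words correspond exactly to rational Dyck paths from (0,0) to (n−m, m). -/

import Mathlib

/-!
Every element of a semi-module `A` is `b + t n` with `b ∈ B = A ∖ (A + n)` and `t ≥ 0`, and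
distinct elements of `B` lie in distinct residue classes mod `n`. Since
`b k = b 0 + k m - n (μ'_1 + ⋯ + μ'_k)` and `m` is invertible mod `n`, the elements
`b 0, …, b (n-1)` exhaust `B` and `b n = b 0`. Hence `Σ μ'_j = m`, the Dyck inequalities are
`b k ≥ b 0 = min B`, and the type recovers `A = {b i + t n}` up to translation. Smallness gives
`μ'_j ≤ 1`. Conversely a Dyck word `μ` defines the path `c k = k m - n (μ 1 + ⋯ + μ k) ≥ 0`,
and `{c k + t n | k < n, t ≥ 0}` is a small semi-module with `b = c`, hence of type `μ`.
-/

namespace SemiModule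

/-- A semi-module for coprime `m, n`: a non-empty subset `A ⊆ ℤ`, bounded below, with
`A + m ⊆ A` and `A + n ⊆ A` (the case `d = 1` of EL-charts, with `f a = a + m`). -/
def IsSemiModule (n m : ℕ) (A : Set ℤ) : Prop :=
  A.Nonempty ∧ (∃ c : ℤ, ∀ x ∈ A, c ≤ x) ∧
    (∀ x ∈ A, x + (m : ℤ) ∈ A) ∧ (∀ x ∈ A, x + (n : ℤ) ∈ A)

/-- A semi-module is small if `A + n ⊆ A + m`, i.e. `A + n ⊆ f(A)`. -/
def IsSmall (n m : ℕ) (A : Set ℤ) : Prop :=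
  ∀ x ∈ A, ∃ y ∈ A, x + (n : ℤ) = y + (m : ℤ)

/-- Two semi-modules are equivalent if they differ by an integer shift. -/
def SMEquiv (A A' : Set ℤ) : Prop := ∃ z : ℤ, (fun x => x + z) '' A = A'

/-- `B = A ∖ (A + n)`. -/
def BsetZ (n : ℕ) (A : Set ℤ) : Set ℤ := {x | x ∈ A ∧ x - (n : ℤ) ∉ A}

/-- The sequence `b 0, b 1, …` associated with a semi-module: `b 0 = min B` and `b (i+1)` is
the unique element of `B` of the form `b i + m − c * n` with `c` a non-negative integer. -/
noncomputable def bseqZ (n m : ℕ) (A : Set ℤ) : ℕ → ℤ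
  | 0 => sInf (BsetZ n A)
  | i + 1 => sInf {y : ℤ | y ∈ BsetZ n A ∧
      (bseqZ n m A i + (m : ℤ) - y) % (n : ℤ) = 0 ∧ y ≤ bseqZ n m A i + (m : ℤ)}

/-- The entry `μ'_k` (for `1 ≤ k ≤ n`) of the type of a semi-module:
the non-negative integer with `b k = b (k-1) + m − μ'_k * n`. -/
noncomputable def typeZ (n m : ℕ) (A : Set ℤ) (k : ℕ) : ℤ :=
  (bseqZ n m A (k - 1) + (m : ℤ) - bseqZ n m A k) / (n : ℤ)

/-- Membership in the set of words corresponding to rational Dyck paths from `(0,0)` to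
`(n−m, m)`: all entries in `{0,1}`, exactly `m` entries equal to `1`, and
`Σ_{j=1}^k μ_j ≤ k*m/n` for `k = 1, …, n`. -/
def IsDyckWord (n m : ℕ) (μ : ℕ → ℤ) : Prop :=
  (∀ k : ℕ, 1 ≤ k → k ≤ n → μ k = 0 ∨ μ k = 1) ∧
    (∑ k ∈ Finset.Icc 1 n, μ k) = (m : ℤ) ∧
    (∀ k : ℕ, 1 ≤ k → k ≤ n →
      (n : ℤ) * ∑ j ∈ Finset.Icc 1 k, μ j ≤ (k : ℤ) * (m : ℤ))

section SemiModuleBasics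

variable {n m : ℕ} {A : Set ℤ}

lemma IsSemiModule.bddBelow (hA : IsSemiModule n m A) : BddBelow A :=
  let ⟨c, hc⟩ := hA.2.1
  ⟨c, hc⟩

lemma IsSemiModule.add_m_mem (hA : IsSemiModule n m A) : ∀ x ∈ A, x + m ∈ A :=
  hA.2.2.1

lemma IsSemiModule.add_n_mem (hA : IsSemiModule n m A) : ∀ x ∈ A, x + n ∈ A :=
  hA.2.2.2

lemma add_mul_mem (hA : ∀ x ∈ A, x + n ∈ A) {x : ℤ} (hx : x ∈ A) (t : ℕ) :
    x + t * n ∈ A := by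
  induction t with
  | zero => simpa using hx
  | succ t ih => simpa [add_mul, ← add_assoc] using hA _ ih

lemma add_mem_of_dvd (hn : 0 < n) (hA : ∀ x ∈ A, x + n ∈ A) {x d : ℤ} (hx : x ∈ A)
    (hd0 : 0 ≤ d) (hd : (n : ℤ) ∣ d) : x + d ∈ A := by
  obtain ⟨t, rfl⟩ := hd
  lift t to ℕ using nonneg_of_mul_nonneg_right hd0 (by positivity)
  simpa [mul_comm] using add_mul_mem hA hx t

lemma eq_of_mem_bsetZ_of_dvd (hn : 0 < n) (hA : ∀ x ∈ A, x + n ∈ A) {b b' : ℤ}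
    (hb : b ∈ BsetZ n A) (hb' : b' ∈ BsetZ n A) (hd : (n : ℤ) ∣ b - b') : b = b' := by
  wlog hle : b ≤ b' generalizing b b'
  · exact (this hb' hb (dvd_sub_comm.mp hd) (le_of_not_ge hle)).symm
  by_contra hne
  have hd' : (n : ℤ) ∣ b' - b := dvd_sub_comm.mp hd
  have hgap : (n : ℤ) ≤ b' - b := Int.le_of_dvd (by omega) hd'
  refine hb'.2 ?_
  have := add_mem_of_dvd hn hA hb.1 (by omega) (dvd_sub hd' (dvd_refl (n : ℤ)))
  rwa [show b + (b' - b - n) = b' - n by ring] at this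

lemma exists_mem_bsetZ_add_mul (hn : 0 < n) (hbdd : BddBelow A) {x : ℤ} (hx : x ∈ A) :
    ∃ b ∈ BsetZ n A, ∃ t : ℕ, x = b + t * n := by
  classical
  obtain ⟨c, hc⟩ := hbdd
  have hexit : ∃ t : ℕ, x - (t + 1) * n ∉ A := by
    refine ⟨(x - c).toNat, fun h => ?_⟩
    have := hc h
    nlinarith [Int.self_le_toNat (x - c), (by exact_mod_cast hn : (0 : ℤ) < n)]
  refine ⟨x - Nat.find hexit * n, ⟨?_, ?_⟩, Nat.find hexit, by ring⟩
  · rcases h : Nat.find hexit with _ | t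
    · simpa using hx
    · simpa using Nat.find_min hexit (h ▸ Nat.lt_succ_self t)
  · simpa [sub_sub, add_mul] using Nat.find_spec hexit

end SemiModuleBasics

/-- The set whose infimum defines `bseqZ n m A (i + 1)` from `x = bseqZ n m A i`. -/
def succCandidates (n m : ℕ) (A : Set ℤ) (x : ℤ) : Set ℤ :=
  {y : ℤ | y ∈ BsetZ n A ∧ (x + (m : ℤ) - y) % (n : ℤ) = 0 ∧ y ≤ x + (m : ℤ)}

section Sequence

variable {n m : ℕ} {A : Set ℤ}

lemma bddBelow_bsetZ (hA : IsSemiModule n m A) : BddBelow (BsetZ n A) :=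
  hA.bddBelow.mono fun _ hx => hx.1

lemma bseqZ_zero_isLeast (hn : 0 < n) (hA : IsSemiModule n m A) :
    IsLeast (BsetZ n A) (bseqZ n m A 0) := by
  obtain ⟨a, ha⟩ := hA.1
  obtain ⟨b, hb, -⟩ := exists_mem_bsetZ_add_mul hn hA.bddBelow ha
  exact ⟨Int.csInf_mem ⟨b, hb⟩ (bddBelow_bsetZ hA), fun y hy => csInf_le (bddBelow_bsetZ hA) hy⟩

lemma sInf_succCandidates_mem (hn : 0 < n) (hA : IsSemiModule n m A) {x : ℤ} (hx : x ∈ A) :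
    sInf (succCandidates n m A x) ∈ succCandidates n m A x := by
  obtain ⟨b, hb, t, ht⟩ := exists_mem_bsetZ_add_mul hn hA.bddBelow (hA.add_m_mem x hx)
  have hbx : b ∈ succCandidates n m A x :=
    ⟨hb, Int.emod_eq_zero_of_dvd ⟨t, by rw [ht]; ring⟩, by rw [ht]; nlinarith⟩
  exact Int.csInf_mem ⟨b, hbx⟩ ((bddBelow_bsetZ hA).mono fun _ hy => hy.1)

lemma bseqZ_mem_bsetZ (hn : 0 < n) (hA : IsSemiModule n m A) :
    ∀ i, bseqZ n m A i ∈ BsetZ n A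
  | 0 => (bseqZ_zero_isLeast hn hA).1
  | i + 1 => (sInf_succCandidates_mem hn hA (bseqZ_mem_bsetZ hn hA i).1).1

lemma bseqZ_succ_mem_succCandidates (hn : 0 < n) (hA : IsSemiModule n m A) (i : ℕ) :
    bseqZ n m A (i + 1) ∈ succCandidates n m A (bseqZ n m A i) :=
  sInf_succCandidates_mem hn hA (bseqZ_mem_bsetZ hn hA i).1

lemma dvd_bseqZ_add_sub_bseqZ_succ (hn : 0 < n) (hA : IsSemiModule n m A) (i : ℕ) :
    (n : ℤ) ∣ bseqZ n m A i + m - bseqZ n m A (i + 1) :=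
  Int.dvd_of_emod_eq_zero (bseqZ_succ_mem_succCandidates hn hA i).2.1

lemma bseqZ_succ_eq_of_dvd (hn : 0 < n) (hA : IsSemiModule n m A) (i : ℕ) {y : ℤ}
    (hy : y ∈ BsetZ n A) (hd : (n : ℤ) ∣ bseqZ n m A i + m - y) : bseqZ n m A (i + 1) = y := by
  refine eq_of_mem_bsetZ_of_dvd hn hA.add_n_mem (bseqZ_mem_bsetZ hn hA _) hy ?_
  simpa only [sub_sub_sub_cancel_left] using dvd_sub hd (dvd_bseqZ_add_sub_bseqZ_succ hn hA i)

lemma bseqZ_succ (hn : 0 < n) (hA : IsSemiModule n m A) (i : ℕ) :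
    bseqZ n m A (i + 1) = bseqZ n m A i + m - n * typeZ n m A (i + 1) := by
  rw [typeZ, Nat.add_sub_cancel, Int.mul_ediv_cancel' (dvd_bseqZ_add_sub_bseqZ_succ hn hA i)]
  omega

lemma typeZ_succ_nonneg (hn : 0 < n) (hA : IsSemiModule n m A) (i : ℕ) :
    0 ≤ typeZ n m A (i + 1) := by
  have hle := (bseqZ_succ_mem_succCandidates hn hA i).2.2
  rw [typeZ, Nat.add_sub_cancel]
  exact Int.ediv_nonneg (by omega) (by positivity)

lemma bseqZ_eq_sum_typeZ (hn : 0 < n) (hA : IsSemiModule n m A) (k : ℕ) :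
    bseqZ n m A k = bseqZ n m A 0 + k * m - n * ∑ j ∈ Finset.Icc 1 k, typeZ n m A j := by
  induction k with
  | zero => simp
  | succ k ih =>
    rw [Finset.sum_Icc_succ_top (by omega), bseqZ_succ hn hA k, ih]
    push_cast
    ring

lemma bseqZ_n_eq_bseqZ_zero (hn : 0 < n) (hA : IsSemiModule n m A) :
    bseqZ n m A n = bseqZ n m A 0 :=
  eq_of_mem_bsetZ_of_dvd hn hA.add_n_mem (bseqZ_mem_bsetZ hn hA n) (bseqZ_mem_bsetZ hn hA 0)
    ⟨m - ∑ j ∈ Finset.Icc 1 n, typeZ n m A j, by rw [bseqZ_eq_sum_typeZ hn hA n]; ring⟩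

lemma sum_typeZ (hn : 0 < n) (hA : IsSemiModule n m A) :
    ∑ j ∈ Finset.Icc 1 n, typeZ n m A j = m := by
  have h := bseqZ_eq_sum_typeZ hn hA n
  rw [bseqZ_n_eq_bseqZ_zero hn hA] at h
  exact mul_left_cancel₀ (by positivity : (n : ℤ) ≠ 0) (by linarith)

lemma mul_sum_typeZ_le (hn : 0 < n) (hA : IsSemiModule n m A) (k : ℕ) :
    (n : ℤ) * ∑ j ∈ Finset.Icc 1 k, typeZ n m A j ≤ k * m := by
  have h := bseqZ_eq_sum_typeZ hn hA k
  have hmin := (bseqZ_zero_isLeast hn hA).2 (bseqZ_mem_bsetZ hn hA k)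
  linarith

/-- If `μ'_{i+1} ≥ 2` then `b i + m - 2 n ∈ A`, and smallness puts `b i - n` in `A`. -/
lemma typeZ_succ_le_one (hn : 0 < n) (hA : IsSemiModule n m A) (hsmall : IsSmall n m A)
    (i : ℕ) : typeZ n m A (i + 1) ≤ 1 := by
  by_contra! h
  have hmem : bseqZ n m A i + m - 2 * n ∈ A := by
    have := add_mem_of_dvd hn hA.add_n_mem (bseqZ_mem_bsetZ hn hA (i + 1)).1
      (d := (typeZ n m A (i + 1) - 2) * n) (by nlinarith) (dvd_mul_left _ _)
    convert this using 1
    rw [bseqZ_succ hn hA i]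
    ring
  obtain ⟨y, hy, hxy⟩ := hsmall _ hmem
  exact (bseqZ_mem_bsetZ hn hA i).2 (by rwa [show bseqZ n m A i - n = y by linarith])

lemma isDyckWord_typeZ (hn : 0 < n) (hA : IsSemiModule n m A) (hsmall : IsSmall n m A) :
    IsDyckWord n m (typeZ n m A) := by
  refine ⟨fun k hk _ => ?_, sum_typeZ hn hA, fun k _ _ => mul_sum_typeZ_le hn hA k⟩
  obtain ⟨i, rfl⟩ : ∃ i, k = i + 1 := ⟨k - 1, by omega⟩
  have := typeZ_succ_nonneg hn hA i
  have := typeZ_succ_le_one hn hA hsmall i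
  omega

end Sequence

section Coprime

variable {n m : ℕ}

lemma exists_lt_dvd_sub_mul (hn : 0 < n) (hmn : Nat.Coprime m n) (d : ℤ) :
    ∃ i < n, (n : ℤ) ∣ d - i * m := by
  obtain ⟨a, b, hab⟩ : IsCoprime (m : ℤ) n := Nat.isCoprime_iff_coprime.mpr hmn
  have hn' : (0 : ℤ) < n := by exact_mod_cast hn
  have hi0 : 0 ≤ d * a % n := Int.emod_nonneg _ hn'.ne'
  refine ⟨(d * a % n).toNat, by have := Int.emod_lt_of_pos (d * a) hn'; omega, ?_⟩
  -- `a` inverts `m` modulo `n`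
  rw [Int.toNat_of_nonneg hi0, Int.emod_def]
  exact ⟨d * b + d * a / n * m, by linear_combination -d * hab⟩

lemma eq_of_dvd_sub_mul (hmn : Nat.Coprime m n) {i j : ℕ} (hi : i < n) (hj : j < n)
    (h : (n : ℤ) ∣ i * m - j * m) : i = j := by
  have hco : IsCoprime (n : ℤ) m := Nat.isCoprime_iff_coprime.mpr hmn.symm
  have hdvd : (n : ℤ) ∣ (i - j : ℤ) := hco.dvd_of_dvd_mul_right (by rwa [sub_mul])
  have := Int.eq_zero_of_dvd_of_natAbs_lt_natAbs hdvd (by omega)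
  omega

end Coprime

section Structure

variable {n m : ℕ} {A : Set ℤ}

lemma exists_lt_eq_bseqZ (hn : 0 < n) (hmn : Nat.Coprime m n) (hA : IsSemiModule n m A)
    {b : ℤ} (hb : b ∈ BsetZ n A) : ∃ i < n, b = bseqZ n m A i := by
  obtain ⟨i, hi, hdvd⟩ := exists_lt_dvd_sub_mul hn hmn (b - bseqZ n m A 0)
  refine ⟨i, hi, eq_of_mem_bsetZ_of_dvd hn hA.add_n_mem hb (bseqZ_mem_bsetZ hn hA i) ?_⟩
  obtain ⟨k, hk⟩ := hdvd
  exact ⟨k + ∑ j ∈ Finset.Icc 1 i, typeZ n m A j, by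
    rw [bseqZ_eq_sum_typeZ hn hA i]; linear_combination hk⟩

lemma eq_setOf_bseqZ (hn : 0 < n) (hmn : Nat.Coprime m n) (hA : IsSemiModule n m A) :
    A = {x | ∃ i < n, ∃ t : ℕ, x = bseqZ n m A i + t * n} := by
  ext x
  constructor
  · intro hx
    obtain ⟨b, hb, t, rfl⟩ := exists_mem_bsetZ_add_mul hn hA.bddBelow hx
    obtain ⟨i, hi, rfl⟩ := exists_lt_eq_bseqZ hn hmn hA hb
    exact ⟨i, hi, t, rfl⟩
  · rintro ⟨i, hi, t, rfl⟩
    exact add_mul_mem hA.add_n_mem (bseqZ_mem_bsetZ hn hA i).1 t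

lemma smEquiv_of_typeZ_eq (hn : 0 < n) (hmn : Nat.Coprime m n) {A' : Set ℤ}
    (hA : IsSemiModule n m A) (hA' : IsSemiModule n m A')
    (htype : ∀ k, 1 ≤ k → k ≤ n → typeZ n m A k = typeZ n m A' k) : SMEquiv A A' := by
  set z := bseqZ n m A' 0 - bseqZ n m A 0
  have hshift : ∀ i < n, bseqZ n m A' i = bseqZ n m A i + z := by
    intro i hi
    rw [bseqZ_eq_sum_typeZ hn hA' i, bseqZ_eq_sum_typeZ hn hA i,
      Finset.sum_congr rfl fun j hj => (htype j (Finset.mem_Icc.mp hj).1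
        ((Finset.mem_Icc.mp hj).2.trans hi.le)).symm]
    ring
  refine ⟨z, ?_⟩
  conv_rhs => rw [eq_setOf_bseqZ hn hmn hA']
  rw [eq_setOf_bseqZ hn hmn hA]
  ext x
  simp only [Set.mem_image]
  constructor
  · rintro ⟨_, ⟨i, hi, t, rfl⟩, rfl⟩
    exact ⟨i, hi, t, by rw [hshift i hi]; ring⟩
  · rintro ⟨i, hi, t, rfl⟩
    exact ⟨_, ⟨i, hi, t, rfl⟩, by rw [hshift i hi]; ring⟩

end Structure

section Translation

variable {n m : ℕ} {A : Set ℤ}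

lemma mem_image_add_iff {z y : ℤ} : y ∈ (fun x => x + z) '' A ↔ y - z ∈ A := by
  rw [Set.image_add_right, Set.mem_preimage, ← sub_eq_add_neg]

lemma isSemiModule_image_add (hA : IsSemiModule n m A) (z : ℤ) :
    IsSemiModule n m ((fun x => x + z) '' A) := by
  obtain ⟨c, hc⟩ := hA.bddBelow
  refine ⟨hA.1.image _, ⟨c + z, ?_⟩, ?_, ?_⟩ <;> simp only [mem_image_add_iff]
  · intro x hx
    linarith [hc hx]
  · intro x hx
    simpa [add_sub_right_comm] using hA.add_m_mem _ hx
  · intro x hx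
    simpa [add_sub_right_comm] using hA.add_n_mem _ hx

lemma mem_bsetZ_image_add_iff {z y : ℤ} :
    y ∈ BsetZ n ((fun x => x + z) '' A) ↔ y - z ∈ BsetZ n A := by
  show y ∈ _ ∧ y - n ∉ _ ↔ y - z ∈ A ∧ y - z - n ∉ A
  rw [mem_image_add_iff, mem_image_add_iff, sub_right_comm]

lemma bseqZ_image_add (hn : 0 < n) (hA : IsSemiModule n m A) (z : ℤ) :
    ∀ i, bseqZ n m ((fun x => x + z) '' A) i = bseqZ n m A i + z
  | 0 => by
    refine IsLeast.csInf_eq ⟨?_, fun y hy => ?_⟩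
    · rw [mem_bsetZ_image_add_iff, add_sub_cancel_right]
      exact (bseqZ_zero_isLeast hn hA).1
    · linarith [(bseqZ_zero_isLeast hn hA).2 (mem_bsetZ_image_add_iff.mp hy)]
  | i + 1 => by
    refine bseqZ_succ_eq_of_dvd hn (isSemiModule_image_add hA z) i ?_ ?_
    · rw [mem_bsetZ_image_add_iff, add_sub_cancel_right]
      exact bseqZ_mem_bsetZ hn hA (i + 1)
    · rw [bseqZ_image_add hn hA z i, add_right_comm, add_sub_add_right_eq_sub]
      exact dvd_bseqZ_add_sub_bseqZ_succ hn hA i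

lemma typeZ_image_add (hn : 0 < n) (hA : IsSemiModule n m A) (z : ℤ) (k : ℕ) :
    typeZ n m ((fun x => x + z) '' A) k = typeZ n m A k := by
  simp only [typeZ, bseqZ_image_add hn hA z]
  ring_nf

end Translation

def wordPath (n m : ℕ) (μ : ℕ → ℤ) (k : ℕ) : ℤ :=
  (k : ℤ) * m - n * ∑ j ∈ Finset.Icc 1 k, μ j

def ofWord (n m : ℕ) (μ : ℕ → ℤ) : Set ℤ :=
  {x | ∃ k < n, ∃ t : ℕ, x = wordPath n m μ k + t * n}

section Construction

variable {n m : ℕ} {μ : ℕ → ℤ}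

@[simp]
lemma wordPath_zero : wordPath n m μ 0 = 0 := by
  simp [wordPath]

lemma wordPath_succ (k : ℕ) :
    wordPath n m μ (k + 1) = wordPath n m μ k + m - n * μ (k + 1) := by
  rw [wordPath, wordPath, Finset.sum_Icc_succ_top (by omega)]
  push_cast
  ring

lemma IsDyckWord.wordPath_n (hμ : IsDyckWord n m μ) : wordPath n m μ n = 0 := by
  rw [wordPath, hμ.2.1]
  ring

lemma IsDyckWord.wordPath_nonneg (hμ : IsDyckWord n m μ) {k : ℕ} (hk : k ≤ n) :
    0 ≤ wordPath n m μ k := by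
  rcases Nat.eq_zero_or_pos k with rfl | hk0
  · simp
  · have := hμ.2.2 k hk0 hk
    rw [wordPath]
    linarith

lemma IsDyckWord.wordPath_add_mem_ofWord (hn : 0 < n) (hμ : IsDyckWord n m μ) {k : ℕ}
    (hk : k ≤ n) {s : ℤ} (hs : 0 ≤ s) : wordPath n m μ k + s * n ∈ ofWord n m μ := by
  lift s to ℕ using hs
  rcases hk.lt_or_eq with hk | rfl
  · exact ⟨k, hk, s, rfl⟩
  · exact ⟨0, hn, s, by rw [hμ.wordPath_n, wordPath_zero]⟩

lemma IsDyckWord.isSemiModule_ofWord (hn : 0 < n) (hμ : IsDyckWord n m μ) :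
    IsSemiModule n m (ofWord n m μ) := by
  refine ⟨⟨0, 0, hn, 0, by simp⟩, ⟨0, ?_⟩, ?_, ?_⟩ <;> rintro x ⟨k, hk, t, rfl⟩
  · have := hμ.wordPath_nonneg hk.le
    positivity
  · have hμk := hμ.1 (k + 1) (by omega) hk
    convert hμ.wordPath_add_mem_ofWord hn hk (s := t + μ (k + 1)) (by omega) using 1
    rw [wordPath_succ]
    ring
  · exact ⟨k, hk, t + 1, by push_cast; ring⟩

/-- Going back one step along the path: `c k + n - m = c (k - 1) + (1 - μ k) n`. -/
lemma IsDyckWord.isSmall_ofWord (hn : 0 < n) (hμ : IsDyckWord n m μ) :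
    IsSmall n m (ofWord n m μ) := by
  rintro x ⟨k, hk, t, rfl⟩
  -- the index `0` is traversed as the end `n` of the path
  obtain ⟨j, hj, hc⟩ : ∃ j < n, wordPath n m μ (j + 1) = wordPath n m μ k := by
    rcases k with _ | j
    · exact ⟨n - 1, by omega, by rw [Nat.sub_add_cancel hn, hμ.wordPath_n, wordPath_zero]⟩
    · exact ⟨j, by omega, rfl⟩
  have hμj := hμ.1 (j + 1) (by omega) hj
  refine ⟨_, hμ.wordPath_add_mem_ofWord hn hj.le (s := t + 1 - μ (j + 1)) (by omega), ?_⟩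
  rw [← hc, wordPath_succ]
  ring

lemma wordPath_mem_bsetZ (hmn : Nat.Coprime m n) {k : ℕ} (hk : k < n) :
    wordPath n m μ k ∈ BsetZ n (ofWord n m μ) := by
  refine ⟨⟨k, hk, 0, by simp⟩, ?_⟩
  rintro ⟨j, hj, t, ht⟩
  obtain rfl : k = j := eq_of_dvd_sub_mul hmn hk hj
    ⟨t + 1 + ∑ i ∈ Finset.Icc 1 k, μ i - ∑ i ∈ Finset.Icc 1 j, μ i, by
      simp only [wordPath] at ht; linear_combination ht⟩
  nlinarith

lemma IsDyckWord.bseqZ_ofWord (hn : 0 < n) (hmn : Nat.Coprime m n) (hμ : IsDyckWord n m μ) :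
    ∀ i ≤ n, bseqZ n m (ofWord n m μ) i = wordPath n m μ i
  | 0, _ => by
    rw [wordPath_zero]
    refine IsLeast.csInf_eq ⟨?_, fun y hy => ?_⟩
    · simpa using wordPath_mem_bsetZ hmn hn
    · obtain ⟨k, hk, t, rfl⟩ := hy.1
      have := hμ.wordPath_nonneg hk.le
      positivity
  | i + 1, hi => by
    have hB : wordPath n m μ (i + 1) ∈ BsetZ n (ofWord n m μ) := by
      rcases hi.lt_or_eq with h | h
      · exact wordPath_mem_bsetZ hmn h
      · rw [h, hμ.wordPath_n]
        simpa using wordPath_mem_bsetZ (μ := μ) hmn hn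
    refine bseqZ_succ_eq_of_dvd hn (hμ.isSemiModule_ofWord hn) i hB ?_
    rw [hμ.bseqZ_ofWord hn hmn i (by omega), wordPath_succ]
    exact ⟨μ (i + 1), by ring⟩

lemma IsDyckWord.typeZ_ofWord (hn : 0 < n) (hmn : Nat.Coprime m n) (hμ : IsDyckWord n m μ)
    {k : ℕ} (hk : 1 ≤ k) (hkn : k ≤ n) : typeZ n m (ofWord n m μ) k = μ k := by
  obtain ⟨i, rfl⟩ : ∃ i, k = i + 1 := ⟨k - 1, by omega⟩
  rw [typeZ, Nat.add_sub_cancel, hμ.bseqZ_ofWord hn hmn i (by omega),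
    hμ.bseqZ_ofWord hn hmn (i + 1) hkn, wordPath_succ]
  simp [hn.ne']

end Construction

theorem type_bijection_small_semimodules_dyck_paths_general
    (n m : ℕ) (hn : 0 < n) (hmn : Nat.Coprime m n) :
    (∀ A A' : Set ℤ, IsSemiModule n m A → IsSmall n m A →
      IsSemiModule n m A' → IsSmall n m A' → SMEquiv A A' →
      ∀ k : ℕ, 1 ≤ k → k ≤ n → typeZ n m A k = typeZ n m A' k) ∧
    (∀ A : Set ℤ, IsSemiModule n m A → IsSmall n m A → IsDyckWord n m (typeZ n m A)) ∧
    (∀ A A' : Set ℤ, IsSemiModule n m A → IsSmall n m A →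
      IsSemiModule n m A' → IsSmall n m A' →
      (∀ k : ℕ, 1 ≤ k → k ≤ n → typeZ n m A k = typeZ n m A' k) → SMEquiv A A') ∧
    (∀ μ : ℕ → ℤ, IsDyckWord n m μ →
      ∃ A : Set ℤ, IsSemiModule n m A ∧ IsSmall n m A ∧
        ∀ k : ℕ, 1 ≤ k → k ≤ n → typeZ n m A k = μ k) := by
  refine ⟨?_, fun A hA hsmall => isDyckWord_typeZ hn hA hsmall, ?_, ?_⟩
  · rintro A _ hA - - - ⟨z, rfl⟩ k - -
    exact (typeZ_image_add hn hA z k).symm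
  · rintro A A' hA - hA' - htype
    exact smEquiv_of_typeZ_eq hn hmn hA hA' htype
  · intro μ hμ
    exact ⟨ofWord n m μ, hμ.isSemiModule_ofWord hn, hμ.isSmall_ofWord hn,
      fun k hk hkn => hμ.typeZ_ofWord hn hmn hk hkn⟩

/-- (`d = 1`.)  The type induces a bijection from the set of equivalence
classes of small semi-modules onto the set of words `μ' ∈ {0,1}ⁿ` with exactly `m` entries
equal to `1` and `Σ_{i=1}^k μ'_i ≤ k*m/n` for every `k = 1, …, n` — the words corresponding
exactly to the rational Dyck paths from `(0,0)` to `(n−m, m)`. -/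
theorem type_bijection_small_semimodules_dyck_paths
    (n m : ℕ) (hn : 0 < n) (hm : 0 < m) (hmn : Nat.Coprime m n) (hlt : m < n) :
    (∀ A A' : Set ℤ, IsSemiModule n m A → IsSmall n m A →
      IsSemiModule n m A' → IsSmall n m A' → SMEquiv A A' →
      ∀ k : ℕ, 1 ≤ k → k ≤ n → typeZ n m A k = typeZ n m A' k) ∧
    (∀ A : Set ℤ, IsSemiModule n m A → IsSmall n m A → IsDyckWord n m (typeZ n m A)) ∧
    (∀ A A' : Set ℤ, IsSemiModule n m A → IsSmall n m A →
      IsSemiModule n m A' → IsSmall n m A' →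
      (∀ k : ℕ, 1 ≤ k → k ≤ n → typeZ n m A k = typeZ n m A' k) → SMEquiv A A') ∧
    (∀ μ : ℕ → ℤ, IsDyckWord n m μ →
      ∃ A : Set ℤ, IsSemiModule n m A ∧ IsSmall n m A ∧
        ∀ k : ℕ, 1 ≤ k → k ≤ n → typeZ n m A k = μ k) :=
  type_bijection_small_semimodules_dyck_paths_general n m hn hmn

end SemiModule
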